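/- arXiv:1907.03525 — 6 statements merged into one kernel-verified Lean document; each statement's English description precedes it below -/
import Mathlib

section
/- Let ℏ be a nonzero complex number. There do not exist polynomials p, q ∈ ℂ[X] with q ≠ 0 such that p(s+ℏ)·p(s)·s = q(s+ℏ)·q(s)·(s+ℏ) for every s ∈ ℂ. Equivalently, the multiplicative difference equation a(s+ℏ)·a(s) = (s+ℏ)/s admits no solution a which is a rational function of s. -/
open Polynomial

private lemma rootMult_comp_X_add_C (p : Polynomial ℂ) (c a : ℂ) :
    (p.comp (X + C c)).rootMultiplicity a = p.rootMultiplicity (a + c) := by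
  rw [rootMultiplicity_eq_rootMultiplicity (p := p) (t := a + c),
      rootMultiplicity_eq_rootMultiplicity (p := p.comp (X + C c)) (t := a),
      comp_assoc]
  congr 2
  simp [add_comp, C_add, add_assoc]

/-- **Non-existence of rational solutions of the multiplicative difference equation
`a(s+ℏ)·a(s) = (s+ℏ)/s`.**  For a fixed nonzero `ℏ ∈ ℂ`, there are no polynomials
`p, q ∈ ℂ[X]` with `q ≠ 0` such that `p(s+ℏ)·p(s)·s = q(s+ℏ)·q(s)·(s+ℏ)` for all `s ∈ ℂ`
(the cleared-denominator form of the equation with `a = p/q`). -/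
theorem no_rational_solution_of_multiplicative_difference_equation
    (ℏ : ℂ) (hℏ : ℏ ≠ 0) :
    ¬ ∃ p q : Polynomial ℂ, q ≠ 0 ∧
      ∀ s : ℂ, p.eval (s + ℏ) * p.eval s * s = q.eval (s + ℏ) * q.eval s * (s + ℏ) := by
  rintro ⟨p, q, hq, heq⟩
  classical
  -- polynomial identity
  have hpoly : p.comp (X + C ℏ) * p * X = q.comp (X + C ℏ) * q * (X + C ℏ) := by
    apply Polynomial.funext
    intro s
    simpa [eval_comp] using heq s
  have hq' : q.comp (X + C ℏ) ≠ 0 := comp_X_add_C_ne_zero_iff.mpr hq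
  have hXC : (X + C ℏ : Polynomial ℂ) ≠ 0 := X_add_C_ne_zero ℏ
  have hp : p ≠ 0 := by
    rintro rfl
    exact (mul_ne_zero (mul_ne_zero hq' hq) hXC) (by simpa using hpoly.symm)
  have hp' : p.comp (X + C ℏ) ≠ 0 := comp_X_add_C_ne_zero_iff.mpr hp
  have hX : (X : Polynomial ℂ) ≠ 0 := X_ne_zero
  -- the multiplicity identity at each point α
  have key : ∀ α : ℂ,
      (p.rootMultiplicity (α + ℏ) : ℤ) + p.rootMultiplicity α + (if α = 0 then 1 else 0)
        = (q.rootMultiplicity (α + ℏ) : ℤ) + q.rootMultiplicity α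
            + (if α = -ℏ then 1 else 0) := by
    intro α
    have h := congrArg (rootMultiplicity α) hpoly
    rw [rootMultiplicity_mul (mul_ne_zero (mul_ne_zero hp' hp) hX),
        rootMultiplicity_mul (mul_ne_zero hp' hp),
        rootMultiplicity_mul (mul_ne_zero (mul_ne_zero hq' hq) hXC),
        rootMultiplicity_mul (mul_ne_zero hq' hq),
        rootMult_comp_X_add_C, rootMult_comp_X_add_C] at h
    have hXm : rootMultiplicity α (X : Polynomial ℂ) = if α = 0 then 1 else 0 := by
      simpa using (rootMultiplicity_X_sub_C (x := α) (y := (0 : ℂ)))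
    have hXCm : rootMultiplicity α (X + C ℏ : Polynomial ℂ) = if α = -ℏ then 1 else 0 := by
      have : (X + C ℏ : Polynomial ℂ) = X - C (-ℏ) := by rw [C_neg, sub_neg_eq_add]
      rw [this, rootMultiplicity_X_sub_C]
    rw [hXm, hXCm] at h
    exact_mod_cast congrArg (Nat.cast : ℕ → ℤ) h
  -- the integer sequence of multiplicity differences along the lattice
  set d : ℤ → ℤ := fun n =>
    (p.rootMultiplicity ((n : ℂ) * ℏ) : ℤ) - (q.rootMultiplicity ((n : ℂ) * ℏ) : ℤ) with hd
  have hrec : ∀ n : ℤ, d (n + 1) + d n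
      = (if n = -1 then 1 else 0) - (if n = 0 then 1 else 0) := by
    intro n
    have h := key ((n : ℂ) * ℏ)
    have e1 : (n : ℂ) * ℏ + ℏ = ((n + 1 : ℤ) : ℂ) * ℏ := by push_cast; ring
    have e2 : ((n : ℂ) * ℏ = 0) ↔ (n = 0) := by
      constructor
      · intro h0
        rcases mul_eq_zero.mp h0 with h0 | h0
        · exact_mod_cast h0
        · exact absurd h0 hℏ
      · rintro rfl; simp
    have e3 : ((n : ℂ) * ℏ = -ℏ) ↔ (n = -1) := by
      constructor
      · intro h0
        have : ((n + 1 : ℤ) : ℂ) * ℏ = 0 := by push_cast; linear_combination h0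
        rcases mul_eq_zero.mp this with h0' | h0'
        · have : (n + 1 : ℤ) = 0 := by exact_mod_cast h0'
          omega
        · exact absurd h0' hℏ
      · rintro rfl; push_cast; ring
    rw [e1] at h
    simp only [hd, e2, e3] at h ⊢
    by_cases h2 : n = 0 <;> by_cases h3 : n = -1 <;> simp [h2, h3] at h ⊢ <;> omega
  -- finiteness of the support of d
  have hroots : Set.Finite { x : ℂ | IsRoot (p * q) x } :=
    finite_setOf_isRoot (mul_ne_zero hp hq)
  have hinj : Function.Injective (fun n : ℤ => (n : ℂ) * ℏ) := by
    intro a b hab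
    have : (a : ℂ) = b := mul_right_cancel₀ hℏ hab
    exact_mod_cast this
  have hsupp : { n : ℤ | d n ≠ 0 } ⊆ (fun n : ℤ => (n : ℂ) * ℏ) ⁻¹' { x | IsRoot (p * q) x } := by
    intro n hn
    simp only [Set.mem_setOf_eq, hd] at hn ⊢
    have : p.rootMultiplicity ((n : ℂ) * ℏ) ≠ 0 ∨ q.rootMultiplicity ((n : ℂ) * ℏ) ≠ 0 := by
      by_contra hc
      push_neg at hc
      omega
    rw [Set.mem_preimage, Set.mem_setOf_eq, IsRoot.def, eval_mul, mul_eq_zero]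
    rcases this with h | h
    · exact Or.inl (by_contra fun hr => h (rootMultiplicity_eq_zero hr))
    · exact Or.inr (by_contra fun hr => h (rootMultiplicity_eq_zero hr))
  have hfin : Set.Finite { n : ℤ | d n ≠ 0 } :=
    Set.Finite.subset (Set.Finite.preimage hinj.injOn hroots) hsupp
  -- get bounds
  obtain ⟨N, hN⟩ := hfin.bddAbove
  obtain ⟨M, hM⟩ := hfin.bddBelow
  have hzero : ∀ n : ℤ, n > N → d n = 0 := by
    intro n hn
    by_contra hc
    exact absurd (hN hc) (by omega)
  have hzero' : ∀ n : ℤ, n < M → d n = 0 := by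
    intro n hn
    by_contra hc
    exact absurd (hM hc) (by omega)
  -- positive side: |d n| constant for n ≥ 1, hence d 1 = 0
  have habs : ∀ n : ℤ, 1 ≤ n → (d n).natAbs = (d 1).natAbs := by
    intro n
    refine Int.le_induction (motive := fun n _ => (d n).natAbs = (d 1).natAbs) rfl (fun k hk ih => ?_) n
    have h := hrec k
    rw [if_neg (by omega), if_neg (by omega)] at h
    omega
  have hd1 : d 1 = 0 := by
    have hbig : (1 : ℤ) ≤ max (N + 1) 1 := le_max_right _ _
    have := habs (max (N + 1) 1) hbig
    have h0 : d (max (N + 1) 1) = 0 := by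
      rcases le_or_gt (N + 1) 1 with h | h
      · rcases le_or_gt N 0 with h' | h'
        · exact hzero _ (by omega)
        · omega
      · exact hzero _ (by omega)
    omega
  -- negative side: |d n| constant for n ≤ -1, hence d (-1) = 0
  have habs' : ∀ n : ℤ, n ≤ -1 → (d n).natAbs = (d (-1)).natAbs := by
    intro n
    refine Int.le_induction_down (motive := fun n _ => (d n).natAbs = (d (-1)).natAbs) rfl (fun k hk ih => ?_) n
    have h := hrec (k - 1)
    rw [if_neg (by omega), if_neg (by omega)] at h
    have hk1 : k - 1 + 1 = k := by ring
    rw [hk1] at h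
    omega
  have hdm1 : d (-1) = 0 := by
    have hsmall : min (M - 1) (-1) ≤ -1 := min_le_right _ _
    have := habs' (min (M - 1) (-1)) hsmall
    have h0 : d (min (M - 1) (-1)) = 0 := by
      rcases le_or_gt (M - 1) (-1) with h | h
      · exact hzero' _ (by omega)
      · exact hzero' _ (by omega)
    omega
  -- the two special equations give a contradiction
  have h0 : d 1 + d 0 = -1 := by
    have := hrec 0
    rw [if_neg (by omega), if_pos rfl] at this
    simpa using this
  have hm1 : d 0 + d (-1) = 1 := by
    have := hrec (-1)
    rw [if_pos rfl, if_neg (by omega)] at this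
    simpa using this
  omega
end

section
/- There do not exist polynomials p, q ∈ ℂ[X] with q ≠ 0 such that Γ(x)·Γ(x+1)·q(x) = Γ(x+1/2)²·p(x) for every x ∈ ℂ with Re x > 0. In other words, the function φ(x) = Γ(x)Γ(x+1)/Γ(x+1/2)² is not (the restriction of) a rational function. -/
open Polynomial

private lemma rm_shift (P : ℂ[X]) (a c : ℂ) :
    rootMultiplicity a (P.comp (X + C c)) = rootMultiplicity (a + c) P := by
  rw [rootMultiplicity_eq_rootMultiplicity (p := P) (t := a + c),
      rootMultiplicity_eq_rootMultiplicity (p := P.comp (X + C c)) (t := a),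
      comp_assoc]
  congr 2
  simp only [add_comp, X_comp, C_comp, C_add]
  ring

private lemma half_plane_infinite : ({x : ℂ | 0 < x.re}).Infinite := by
  apply Set.infinite_of_injective_forall_mem (f := fun n : ℕ => (n : ℂ) + 1)
  · intro a b hab; simpa using hab
  · intro n
    simp only [Set.mem_setOf_eq, Complex.add_re, Complex.natCast_re, Complex.one_re]
    positivity


/-- **The function `φ(x) = Γ(x)Γ(x+1)/Γ(x+1/2)²` is not a rational function.**
There are no polynomials `p, q ∈ ℂ[X]` with `q ≠ 0` such that
`Γ(x)·Γ(x+1)·q(x) = Γ(x+1/2)²·p(x)` for every `x` with `Re x > 0`. -/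
theorem gamma_ratio_not_rational :
    ¬ ∃ p q : Polynomial ℂ, q ≠ 0 ∧
      ∀ x : ℂ, 0 < x.re →
        Complex.Gamma x * Complex.Gamma (x + 1) * q.eval x
          = (Complex.Gamma (x + 1 / 2)) ^ 2 * p.eval x := by
  rintro ⟨p, q, hq, H⟩
  -- Gamma is nonvanishing on the half plane
  have hgam : ∀ x : ℂ, 0 < x.re → Complex.Gamma x ≠ 0 := by
    intro x hx
    refine Complex.Gamma_ne_zero fun m h => ?_
    have := congrArg Complex.re h
    simp only [Complex.neg_re, Complex.natCast_re] at this
    have h2 : (0:ℝ) ≤ m := Nat.cast_nonneg m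
    linarith
  -- p is nonzero
  have hp : p ≠ 0 := by
    intro hp0
    apply hq
    apply eq_of_infinite_eval_eq
    apply Set.Infinite.mono (s := {x : ℂ | 0 < x.re}) ?_ half_plane_infinite
    intro x hx
    simp only [Set.mem_setOf_eq] at hx ⊢
    have h1 := H x hx
    rw [hp0] at h1
    simp only [eval_zero, mul_zero] at h1
    have hx1 : (0:ℝ) < (x + 1).re := by
      simp only [Complex.add_re, Complex.one_re]; linarith
    have := mul_ne_zero (hgam x hx) (hgam _ hx1)
    simp only [eval_zero]
    exact (mul_eq_zero.mp h1).resolve_left this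
  -- the polynomial functional equation
  have E : q * (X + C (2⁻¹ : ℂ)) ^ 2 * (p.comp (X + C 1))
      = p * (X * (X + C 1)) * (q.comp (X + C 1)) := by
    apply eq_of_infinite_eval_eq
    apply Set.Infinite.mono (s := {x : ℂ | 0 < x.re}) ?_ half_plane_infinite
    intro x hx
    simp only [Set.mem_setOf_eq] at hx
    simp only [Set.mem_setOf_eq, eval_mul, eval_pow, eval_add, eval_X, eval_C, eval_comp]
    have hx0 : x ≠ 0 := fun h => by simp [h] at hx
    have hx1 : x + 1 ≠ 0 := fun h => by
      have := congrArg Complex.re h; simp at this; linarith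
    have hg1 : Complex.Gamma x ≠ 0 := hgam x hx
    have hg2 : Complex.Gamma (x + 1/2) ≠ 0 := by
      apply hgam
      simp only [Complex.add_re]
      norm_num
      linarith
    have e1 : Complex.Gamma (x + 1) = x * Complex.Gamma x := Complex.Gamma_add_one x hx0
    have e2 : Complex.Gamma (x + 1 + 1) = (x + 1) * Complex.Gamma (x + 1) :=
      Complex.Gamma_add_one _ hx1
    have e3 : Complex.Gamma (x + 1 + 1/2) = (x + 1/2) * Complex.Gamma (x + 1/2) := by
      have := Complex.Gamma_add_one (x + 1/2) (by
        intro h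
        have := congrArg Complex.re h
        simp only [Complex.add_re] at this
        norm_num at this
        linarith)
      rw [← this]; ring_nf
    have h1 := H x hx
    have h2 := H (x + 1) (by simp only [Complex.add_re, Complex.one_re]; linarith)
    rw [e2, e3, e1] at h2
    rw [e1] at h1
    have key : (x * Complex.Gamma x ^ 2 * Complex.Gamma (x+1/2) ^ 2) *
        (q.eval x * (x + 2⁻¹) ^ 2 * p.eval (x+1)) =
        (x * Complex.Gamma x ^ 2 * Complex.Gamma (x+1/2) ^ 2) *
        (p.eval x * (x * (x+1)) * q.eval (x+1)) := by
      linear_combination (Complex.Gamma (x+1/2)^2 * (x+2⁻¹)^2 * p.eval (x+1)) * h1 -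
        (Complex.Gamma (x+1/2)^2 * p.eval x) * h2
    exact mul_left_cancel₀ (mul_ne_zero (mul_ne_zero hx0 (pow_ne_zero _ hg1))
      (pow_ne_zero _ hg2)) key
  -- zero-count difference function
  set F : ℤ → ℤ := fun n =>
    (rootMultiplicity ((n : ℤ) : ℂ) p : ℤ) - (rootMultiplicity ((n : ℤ) : ℂ) q : ℤ) with hF
  have hsq : ((X + C (2⁻¹ : ℂ)) ^ 2 : ℂ[X]) ≠ 0 := pow_ne_zero _ (X_add_C_ne_zero _)
  have hpc : p.comp (X + C 1) ≠ 0 := comp_X_add_C_ne_zero_iff.mpr hp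
  have hqc : q.comp (X + C 1) ≠ 0 := comp_X_add_C_ne_zero_iff.mpr hq
  have hXX : (X * (X + C 1) : ℂ[X]) ≠ 0 := mul_ne_zero X_ne_zero (X_add_C_ne_zero _)
  have hstep : ∀ n : ℤ, F (n + 1)
      = F n + (if n = 0 then 1 else 0) + (if n = -1 then 1 else 0) := by
    intro n
    have hL := congrArg (rootMultiplicity ((n : ℤ) : ℂ)) E
    rw [rootMultiplicity_mul (mul_ne_zero (mul_ne_zero hq hsq) hpc),
        rootMultiplicity_mul (mul_ne_zero hq hsq),
        rootMultiplicity_mul (mul_ne_zero (mul_ne_zero hp hXX) hqc),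
        rootMultiplicity_mul (mul_ne_zero hp hXX),
        rootMultiplicity_mul (mul_ne_zero (X_ne_zero) (X_add_C_ne_zero _))] at hL
    have hS : rootMultiplicity ((n : ℤ) : ℂ) ((X + C (2⁻¹ : ℂ)) ^ 2) = 0 := by
      apply rootMultiplicity_eq_zero
      simp only [IsRoot, eval_pow, eval_add, eval_X, eval_C, pow_eq_zero_iff, ne_eq,
        OfNat.ofNat_ne_zero, not_false_eq_true]
      intro h
      have h2 : ((2 * n + 1 : ℤ) : ℂ) = ((0 : ℤ) : ℂ) := by push_cast; linear_combination 2 * h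
      have := Int.cast_injective h2
      omega
    have hXv : rootMultiplicity ((n : ℤ) : ℂ) (X : ℂ[X]) = if n = 0 then 1 else 0 := by
      have : (X : ℂ[X]) = X - C 0 := by simp
      rw [this, rootMultiplicity_X_sub_C]
      by_cases h : n = 0
      · simp [h]
      · rw [if_neg, if_neg h]
        exact_mod_cast fun h2 => h (by exact_mod_cast h2)
    have hX1 : rootMultiplicity ((n : ℤ) : ℂ) (X + C (1 : ℂ)) = if n = -1 then 1 else 0 := by
      have : (X + C (1 : ℂ) : ℂ[X]) = X - C (-1) := by rw [C_neg, sub_neg_eq_add]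
      rw [this, rootMultiplicity_X_sub_C]
      by_cases h : n = -1
      · simp [h]
      · rw [if_neg, if_neg h]
        intro h2
        apply h
        have : ((n : ℤ) : ℂ) = ((-1 : ℤ) : ℂ) := by push_cast; exact h2
        exact_mod_cast Int.cast_injective this
    have hsp : rootMultiplicity ((n : ℤ) : ℂ) (p.comp (X + C 1))
        = rootMultiplicity ((n + 1 : ℤ) : ℂ) p := by
      rw [rm_shift]; congr 1; push_cast; ring
    have hsq2 : rootMultiplicity ((n : ℤ) : ℂ) (q.comp (X + C 1))
        = rootMultiplicity ((n + 1 : ℤ) : ℂ) q := by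
      rw [rm_shift]; congr 1; push_cast; ring
    rw [hS, hXv, hX1, hsp, hsq2] at hL
    simp only [hF]
    split_ifs at hL ⊢ <;> omega
  -- F is constant on [1, ∞) and on (-∞, -1]
  have up : ∀ k : ℕ, F (1 + k) = F 1 := by
    intro k
    induction k with
    | zero => simp
    | succ k ih =>
      have h1 : (1 + (k + 1 : ℕ) : ℤ) = (1 + k : ℤ) + 1 := by push_cast; ring
      rw [h1, hstep (1 + k)]
      rw [if_neg (by omega), if_neg (by omega), add_zero, add_zero]
      exact_mod_cast ih
  have down : ∀ k : ℕ, F (-1 - k) = F (-1) := by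
    intro k
    induction k with
    | zero => simp
    | succ k ih =>
      have h1 : (-1 - k : ℤ) = (-1 - (k + 1 : ℕ) : ℤ) + 1 := by push_cast; ring
      have h2 := hstep (-1 - (k + 1 : ℕ))
      rw [← h1, if_neg (by omega), if_neg (by omega), add_zero, add_zero] at h2
      omega
  have jump : F 1 = F (-1) + 2 := by
    have h0 := hstep 0
    have h1 := hstep (-1)
    norm_num at h0 h1
    omega
  -- pick integer points beyond all roots
  have hfin : Set.Finite {x : ℂ | (p * q).IsRoot x} :=
    finite_setOf_isRoot (mul_ne_zero hp hq)
  have hnr : ∀ (g : ℕ → ℤ), Function.Injective g →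
      ∃ k : ℕ, ¬ (p * q).IsRoot ((g k : ℤ) : ℂ) := by
    intro g hg
    by_contra hcon
    push_neg at hcon
    refine (Set.not_infinite.mpr hfin) (Set.infinite_of_injective_forall_mem
      (f := fun k : ℕ => ((g k : ℤ) : ℂ)) ?_ hcon)
    intro a b hab
    exact hg (Int.cast_injective hab)
  obtain ⟨k1, hk1⟩ := hnr (fun k => 1 + (k : ℤ)) (fun a b h => by simpa using h)
  obtain ⟨k2, hk2⟩ := hnr (fun k => -1 - (k : ℤ)) (fun a b h => by
    simp only [sub_right_inj] at h
    exact_mod_cast h)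
  have hF1 : F 1 = 0 := by
    rw [← up k1]
    have h1 : rootMultiplicity ((1 + (k1 : ℤ) : ℤ) : ℂ) p = 0 :=
      rootMultiplicity_eq_zero (fun h => hk1 (by simp [IsRoot, eval_mul] at h ⊢; tauto))
    have h2 : rootMultiplicity ((1 + (k1 : ℤ) : ℤ) : ℂ) q = 0 :=
      rootMultiplicity_eq_zero (fun h => hk1 (by simp [IsRoot, eval_mul] at h ⊢; tauto))
    simp only [hF]
    push_cast at h1 h2 ⊢
    simp [h1, h2]
  have hFm1 : F (-1) = 0 := by
    rw [← down k2]
    have h1 : rootMultiplicity ((-1 - (k2 : ℤ) : ℤ) : ℂ) p = 0 :=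
      rootMultiplicity_eq_zero (fun h => hk2 (by simp [IsRoot, eval_mul] at h ⊢; tauto))
    have h2 : rootMultiplicity ((-1 - (k2 : ℤ) : ℤ) : ℂ) q = 0 :=
      rootMultiplicity_eq_zero (fun h => hk2 (by simp [IsRoot, eval_mul] at h ⊢; tauto))
    simp only [hF]
    push_cast at h1 h2 ⊢
    simp [h1, h2]
  omega
end

section
/- The function φ(x) = Γ(x)Γ(x+1)/Γ(x+1/2)² tends to 1 as Re x → +∞; that is, φ converges to 1 along the filter comap(re, atTop) on ℂ. -/
open Filter Finset

/-- `φ(x) = Γ(x)Γ(x+1)/Γ(x+1/2)²`. -/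
noncomputable def phi (x : ℂ) : ℂ :=
  Complex.Gamma x * Complex.Gamma (x + 1) / (Complex.Gamma (x + 1 / 2)) ^ 2

lemma inv_one_sub_norm_le {c : ℂ} {s : ℝ} (hcs : ‖c‖ ≤ s) (hs : s ≤ 1/2) :
    ‖(1 - c)⁻¹‖ ≤ 1 + 2 * s ∧ ‖(1 - c)⁻¹ - 1‖ ≤ 2 * s := by
  have hs0 : 0 ≤ s := le_trans (norm_nonneg c) hcs
  have h1 : (1 : ℝ) - s ≤ ‖1 - c‖ := by
    have h := norm_sub_norm_le (1 : ℂ) c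
    rw [norm_one] at h
    linarith
  have h2 : (1:ℝ)/2 ≤ ‖1 - c‖ := by linarith
  have hpos : (0:ℝ) < ‖1 - c‖ := by linarith
  have hne : (1 : ℂ) - c ≠ 0 := by
    intro h; rw [h, norm_zero] at h2; linarith
  have hnorm : ‖(1 - c)⁻¹‖ = ‖1 - c‖⁻¹ := norm_inv _
  have hbig : ‖(1 - c)⁻¹‖ ≤ 1 + 2 * s := by
    rw [hnorm, inv_le_comm₀ hpos (by positivity)]
    refine le_trans ?_ h1
    rw [inv_eq_one_div, div_le_iff₀ (by positivity)]
    nlinarith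
  refine ⟨hbig, ?_⟩
  have hrw : (1 - c)⁻¹ - 1 = c * (1 - c)⁻¹ := by
    field_simp
    ring
  rw [hrw]
  calc ‖c * (1 - c)⁻¹‖ = ‖c‖ * ‖(1-c)⁻¹‖ := norm_mul _ _
    _ ≤ s * 2 := by
        apply mul_le_mul hcs _ (norm_nonneg _) hs0
        rw [hnorm]
        rw [inv_le_comm₀ hpos (by norm_num)]
        linarith
    _ = 2 * s := by ring

lemma prod_bound (c : ℕ → ℂ) (s : ℕ → ℝ)
    (hcs : ∀ j, ‖c j‖ ≤ s j) (n : ℕ)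
    (hpt : ∀ j, ‖(1 - c j)⁻¹‖ ≤ 1 + 2 * s j ∧ ‖(1 - c j)⁻¹ - 1‖ ≤ 2 * s j) :
    ‖∏ j ∈ Finset.range n, (1 - c j)⁻¹‖ ≤ Real.exp (2 * ∑ j ∈ Finset.range n, s j) ∧
    ‖∏ j ∈ Finset.range n, (1 - c j)⁻¹ - 1‖ ≤ Real.exp (2 * ∑ j ∈ Finset.range n, s j) - 1 := by
  have hs0 : ∀ j, 0 ≤ s j := fun j => le_trans (norm_nonneg _) (hcs j)
  induction n with
  | zero => simp
  | succ n ih =>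
    obtain ⟨ihA, ihB⟩ := ih
    set Q := ∏ j ∈ Finset.range n, (1 - c j)⁻¹ with hQ
    set E := Real.exp (2 * ∑ j ∈ Finset.range n, s j) with hE
    have hE1 : 1 ≤ E :=
      Real.one_le_exp (mul_nonneg (by norm_num) (Finset.sum_nonneg fun j _ => hs0 j))
    have key : (1:ℝ) + 2 * s n ≤ Real.exp (2 * s n) := by
      have := Real.add_one_le_exp (2 * s n); linarith
    have hEn : Real.exp (2 * ∑ j ∈ Finset.range (n+1), s j) = E * Real.exp (2 * s n) := by
      rw [hE, ← Real.exp_add, Finset.sum_range_succ]; ring_nf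
    rw [Finset.prod_range_succ, hEn]
    constructor
    · calc ‖Q * (1 - c n)⁻¹‖ = ‖Q‖ * ‖(1 - c n)⁻¹‖ := norm_mul _ _
        _ ≤ E * (1 + 2 * s n) := by
            exact mul_le_mul ihA (hpt n).1 (norm_nonneg _) (by linarith)
        _ ≤ E * Real.exp (2 * s n) := by nlinarith [hs0 n]
    · have hsplit : Q * (1 - c n)⁻¹ - 1 = (Q - 1) * (1 - c n)⁻¹ + ((1 - c n)⁻¹ - 1) := by ring
      rw [hsplit]
      calc ‖(Q - 1) * (1 - c n)⁻¹ + ((1 - c n)⁻¹ - 1)‖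
          ≤ ‖(Q - 1) * (1 - c n)⁻¹‖ + ‖(1 - c n)⁻¹ - 1‖ := norm_add_le _ _
        _ = ‖Q - 1‖ * ‖(1 - c n)⁻¹‖ + ‖(1 - c n)⁻¹ - 1‖ := by rw [norm_mul]
        _ ≤ (E - 1) * (1 + 2 * s n) + 2 * s n := by
            have := mul_le_mul ihB (hpt n).1 (norm_nonneg _) (by linarith [hE1])
            linarith [(hpt n).2]
        _ = E * (1 + 2 * s n) - 1 := by ring
        _ ≤ E * Real.exp (2 * s n) - 1 := by nlinarith [hs0 n]

lemma add_nat_ne_zero {x : ℂ} (hx : 0 < x.re) (j : ℕ) : x + (j:ℂ) ≠ 0 := by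
  intro h
  have h2 : (x + (j:ℂ)).re = 0 := by rw [h]; simp
  rw [Complex.add_re, Complex.natCast_re] at h2
  have h3 : (0:ℝ) ≤ (j:ℝ) := Nat.cast_nonneg j
  linarith

lemma tendsto_prod_phi {x : ℂ} (hx : 0 < x.re) :
    Tendsto (fun n => ∏ j ∈ Finset.range (n+1),
        (x + 1/2 + j)^2 / ((x + j) * (x + 1 + j))) atTop
      (nhds (Complex.Gamma x * Complex.Gamma (x + 1) / (Complex.Gamma (x + 1/2)) ^ 2)) := by
  have hG : Complex.Gamma (x + 1/2) ≠ 0 :=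
    Complex.Gamma_ne_zero_of_re_pos (by simp [Complex.add_re]; linarith)
  have hlim : Tendsto (fun n => Complex.GammaSeq x n * Complex.GammaSeq (x+1) n /
      (Complex.GammaSeq (x+1/2) n) ^ 2) atTop
      (nhds (Complex.Gamma x * Complex.Gamma (x + 1) / (Complex.Gamma (x + 1/2)) ^ 2)) := by
    exact Tendsto.div ((Complex.GammaSeq_tendsto_Gamma x).mul
      (Complex.GammaSeq_tendsto_Gamma (x+1))) ((Complex.GammaSeq_tendsto_Gamma (x+1/2)).pow 2)
      (pow_ne_zero 2 hG)
  refine hlim.congr' ?_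
  filter_upwards [eventually_ge_atTop 1] with n hn
  have hne0 : ∀ j : ℕ, x + (j:ℂ) ≠ 0 := add_nat_ne_zero hx
  have hne1 : ∀ j : ℕ, x + 1 + (j:ℂ) ≠ 0 := by
    intro j
    have := add_nat_ne_zero (x := x + 1) (by simp [Complex.add_re]; linarith) j
    simpa using this
  have hneh : ∀ j : ℕ, x + 1/2 + (j:ℂ) ≠ 0 := by
    intro j
    have := add_nat_ne_zero (x := x + 1/2) (by simp [Complex.add_re]; linarith) j
    simpa using this
  have hnn : (n:ℂ) ≠ 0 := Nat.cast_ne_zero.2 (by omega)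
  have hfac : ((Nat.factorial n : ℕ) : ℂ) ≠ 0 := Nat.cast_ne_zero.2 (Nat.factorial_ne_zero n)
  have hA : ∏ j ∈ Finset.range (n+1), (x + (j:ℂ)) ≠ 0 :=
    Finset.prod_ne_zero_iff.2 fun j _ => hne0 j
  have hB : ∏ j ∈ Finset.range (n+1), (x + 1 + (j:ℂ)) ≠ 0 :=
    Finset.prod_ne_zero_iff.2 fun j _ => hne1 j
  have hC : ∏ j ∈ Finset.range (n+1), (x + 1/2 + (j:ℂ)) ≠ 0 :=
    Finset.prod_ne_zero_iff.2 fun j _ => hneh j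
  have hpow : (n:ℂ) ^ x * (n:ℂ) ^ (x+1) = ((n:ℂ) ^ (x + 1/2)) ^ 2 := by
    rw [sq, ← Complex.cpow_add _ _ hnn, ← Complex.cpow_add _ _ hnn]
    ring_nf
  have hpx : (n:ℂ) ^ (x + 1/2) ≠ 0 := by
    rw [Ne, Complex.cpow_eq_zero_iff]
    tauto
  have hRHS : ∏ j ∈ Finset.range (n+1), (x + 1/2 + (j:ℂ))^2 / ((x + j) * (x + 1 + j))
      = (∏ j ∈ Finset.range (n+1), (x + 1/2 + (j:ℂ)))^2 /
        ((∏ j ∈ Finset.range (n+1), (x + (j:ℂ))) * ∏ j ∈ Finset.range (n+1), (x + 1 + (j:ℂ))) := by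
    rw [Finset.prod_div_distrib, Finset.prod_mul_distrib, Finset.prod_pow]
  rw [hRHS, Complex.GammaSeq, Complex.GammaSeq, Complex.GammaSeq]
  set p := (n:ℂ) ^ x with hp
  set q := (n:ℂ) ^ (x+1) with hq
  set w := (n:ℂ) ^ (x+1/2) with hw
  set A := ∏ j ∈ Finset.range (n+1), (x + (j:ℂ)) with hA'
  set B := ∏ j ∈ Finset.range (n+1), (x + 1 + (j:ℂ)) with hB'
  set C := ∏ j ∈ Finset.range (n+1), (x + 1/2 + (j:ℂ)) with hC'
  field_simp
  linear_combination hpow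

lemma phi_bound {x : ℂ} (hx : 1 ≤ x.re) :
    ‖phi x - 1‖ ≤ Real.exp (1 / (2 * x.re)) - 1 := by
  have hr : 0 < x.re := by linarith
  set r := x.re with hrdef
  set c : ℕ → ℂ := fun j => (4 * (x + 1/2 + (j:ℂ))^2)⁻¹ with hc
  set s : ℕ → ℝ := fun j => (4 * (r + j) * (r + j + 1))⁻¹ with hsdef
  have hneh : ∀ j : ℕ, x + 1/2 + (j:ℂ) ≠ 0 := by
    intro j
    have := add_nat_ne_zero (x := x + 1/2) (by simp [Complex.add_re]; linarith) j
    simpa using this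
  have hre : ∀ j : ℕ, r + j + 1/2 ≤ ‖x + 1/2 + (j:ℂ)‖ := by
    intro j
    have h1 : (x + 1/2 + (j:ℂ)).re = r + 1/2 + j := by
      simp [Complex.add_re, Complex.natCast_re, hrdef]
    have := Complex.re_le_norm (x + 1/2 + (j:ℂ))
    rw [h1] at this
    calc r + j + 1/2 = r + 1/2 + j := by ring
      _ ≤ ‖x + 1/2 + (j:ℂ)‖ := this
  have hcs : ∀ j, ‖c j‖ ≤ s j := by
    intro j
    have hj : (0:ℝ) ≤ (j:ℝ) := Nat.cast_nonneg j
    have hb : 4 * (r + j) * (r + j + 1) ≤ 4 * ‖x + 1/2 + (j:ℂ)‖^2 := by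
      have h2 := hre j
      nlinarith [norm_nonneg (x + 1/2 + (j:ℂ))]
    have hpos : (0:ℝ) < 4 * (r + j) * (r + j + 1) := by positivity
    rw [hc]
    simp only [norm_inv, norm_mul, Complex.norm_ofNat, norm_pow]
    exact inv_anti₀ hpos (by simpa using hb)
  have hs : ∀ j, s j ≤ 1/2 := by
    intro j
    have hj : (0:ℝ) ≤ (j:ℝ) := Nat.cast_nonneg j
    have hpos : (0:ℝ) < 4 * (r + j) * (r + j + 1) := by positivity
    rw [hsdef]
    rw [inv_le_comm₀ hpos (by norm_num)]
    nlinarith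
  have hpt : ∀ j, ‖(1 - c j)⁻¹‖ ≤ 1 + 2 * s j ∧ ‖(1 - c j)⁻¹ - 1‖ ≤ 2 * s j :=
    fun j => inv_one_sub_norm_le (hcs j) (hs j)
  -- sum bound
  have hsum : ∀ n : ℕ, ∑ j ∈ Finset.range n, s j ≤ (4*r)⁻¹ := by
    intro n
    have htel : ∀ j ∈ Finset.range n,
        s j = (fun j : ℕ => (4*(r + j))⁻¹) j - (fun j : ℕ => (4*(r + j))⁻¹) (j+1) := by
      intro j _
      have hj : (0:ℝ) ≤ (j:ℝ) := Nat.cast_nonneg j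
      have h1 : r + (j:ℝ) ≠ 0 := by positivity
      have h2 : r + ((j:ℕ)+1:ℕ) ≠ 0 := by push_cast; positivity
      simp only [hsdef]
      push_cast
      field_simp
      ring
    rw [Finset.sum_congr rfl htel, Finset.sum_range_sub' (fun j : ℕ => (4*(r + j))⁻¹)]
    have hn : (0:ℝ) ≤ ((4:ℝ)*(r + n))⁻¹ := by positivity
    simp only [Nat.cast_zero, add_zero]
    linarith
  -- limit representation
  have hfac : ∀ j : ℕ, (x + 1/2 + (j:ℂ))^2 / ((x + j) * (x + 1 + j)) = (1 - c j)⁻¹ := by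
    intro j
    have h0 := add_nat_ne_zero hr j
    have h1 : x + 1 + (j:ℂ) ≠ 0 := by
      have := add_nat_ne_zero (x := x + 1) (by simp [Complex.add_re]; linarith) j
      simpa using this
    have h2 := hneh j
    have h3 : 1 - c j = ((x + j) * (x + 1 + j)) / ((x + 1/2 + (j:ℂ))^2) := by
      rw [hc, eq_div_iff (pow_ne_zero 2 h2)]
      simp only []
      rw [sub_mul, one_mul, mul_inv, mul_assoc, inv_mul_cancel₀ (pow_ne_zero 2 h2), mul_one]
      ring
    rw [h3, inv_div]
  have hlim : Tendsto (fun n => ∏ j ∈ Finset.range (n+1), (1 - c j)⁻¹) atTop (nhds (phi x)) := by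
    have := tendsto_prod_phi hr
    simp only [hfac] at this
    exact this
  -- combine
  have hbd : ∀ n : ℕ, ‖(∏ j ∈ Finset.range (n+1), (1 - c j)⁻¹) - 1‖ ≤
      Real.exp (1 / (2 * r)) - 1 := by
    intro n
    refine le_trans (prod_bound c s hcs (n+1) hpt).2 ?_
    have h1 : 2 * ∑ j ∈ Finset.range (n+1), s j ≤ 1 / (2*r) := by
      have h2 := hsum (n+1)
      have heq : 2 * (4*r)⁻¹ = 1/(2*r) := by
        field_simp
        ring
      linarith
    have := Real.exp_le_exp.2 h1
    linarith
  exact le_of_tendsto' ((hlim.sub tendsto_const_nhds).norm) hbd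

/-- **`φ(x) → 1` as `Re x → +∞`**, i.e. `φ` tends to `1` along the filter
`comap(re, atTop)` on `ℂ`. -/
theorem phi_tendsto_one :
    Tendsto phi (Filter.comap Complex.re Filter.atTop) (nhds 1) := by
  have hre : Tendsto Complex.re (Filter.comap Complex.re Filter.atTop) Filter.atTop :=
    tendsto_comap
  have hg : Tendsto (fun r : ℝ => Real.exp (1 / (2 * r)) - 1) atTop (nhds 0) := by
    have h1 : Tendsto (fun r : ℝ => 1 / (2 * r)) atTop (nhds 0) := by
      have h2 : Tendsto (fun r : ℝ => 2 * r) atTop atTop :=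
        Tendsto.const_mul_atTop two_pos tendsto_id
      have h3 := h2.inv_tendsto_atTop
      simp only [one_div]
      exact h3
    have h3 : Tendsto (fun r : ℝ => Real.exp (1 / (2 * r))) atTop (nhds 1) := by
      have := (Real.continuous_exp.tendsto 0).comp h1
      simpa [Function.comp_def] using this
    simpa using h3.sub_const 1
  have h0 : Tendsto (fun x : ℂ => phi x - 1) (Filter.comap Complex.re Filter.atTop) (nhds 0) := by
    apply squeeze_zero_norm' (a := fun x : ℂ => Real.exp (1 / (2 * x.re)) - 1)
    · filter_upwards [hre.eventually (eventually_ge_atTop (1:ℝ))] with y hy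
      exact phi_bound hy
    · exact hg.comp hre
  have := h0.add (tendsto_const_nhds (x := (1:ℂ)))
  simpa using this
end

section
/- Let G ∈ ℂ[[t]] be a formal power series with zero constant term satisfying G(t·(1+t)⁻¹) = G(t) − t². Then G(t) = −G(−t·(1−t)⁻¹). (Equivalently: the unique formal solution g(x) ∈ x⁻¹ℂ[[x⁻¹]] of g(x+1) = g(x) − x⁻² satisfies the reflection identity g(x) = −g(1−x).) -/
open PowerSeries

/-- Substitution of a power series `a` with zero constant term into a power series `G`:
the coefficient of `t^n` in `G(a(t))` is `∑_{k ≤ n} G_k · [t^n](a^k)` (only `k ≤ n`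
contribute, since `a` has zero constant term so `a^k` has order at least `k`). -/
noncomputable def substZ (a G : PowerSeries ℂ) : PowerSeries ℂ :=
  PowerSeries.mk fun n =>
    ∑ k ∈ Finset.range (n + 1), PowerSeries.coeff k G * PowerSeries.coeff n (a ^ k)

namespace SubstZAux

lemma coeff_pow_eq_zero {a : PowerSeries ℂ} (ha : constantCoeff a = 0)
    {k n : ℕ} (h : n < k) : coeff n (a ^ k) = 0 := by
  have hd : (X : PowerSeries ℂ) ^ k ∣ a ^ k :=
    pow_dvd_pow_of_dvd (X_dvd_iff.mpr ha) k
  exact (X_pow_dvd_iff.mp hd) n h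

lemma coeff_substZ (a G : PowerSeries ℂ) (n : ℕ) :
    coeff n (substZ a G)
      = ∑ k ∈ Finset.range (n + 1), coeff k G * coeff n (a ^ k) := by
  simp [substZ]

lemma coeff_substZ' {a : PowerSeries ℂ} (ha : constantCoeff a = 0) (G : PowerSeries ℂ)
    {n N : ℕ} (h : n ≤ N) :
    coeff n (substZ a G)
      = ∑ k ∈ Finset.range (N + 1), coeff k G * coeff n (a ^ k) := by
  rw [coeff_substZ]
  apply Finset.sum_subset
  · exact Finset.range_subset_range.mpr (by omega)
  · intro k hk hk2
    simp only [Finset.mem_range] at hk hk2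
    rw [coeff_pow_eq_zero ha (by omega), mul_zero]

lemma substZ_add (a F G : PowerSeries ℂ) :
    substZ a (F + G) = substZ a F + substZ a G := by
  ext n
  simp [coeff_substZ, add_mul, Finset.sum_add_distrib]

lemma substZ_neg (a G : PowerSeries ℂ) : substZ a (-G) = -substZ a G := by
  ext n
  simp [coeff_substZ, Finset.sum_neg_distrib]

lemma substZ_sub (a F G : PowerSeries ℂ) :
    substZ a (F - G) = substZ a F - substZ a G := by
  rw [sub_eq_add_neg, substZ_add, substZ_neg, sub_eq_add_neg]

lemma substZ_one (a : PowerSeries ℂ) : substZ a 1 = 1 := by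
  ext n
  rw [coeff_substZ]
  rw [Finset.sum_eq_single 0]
  · simp
  · intro k hk hk0
    simp [coeff_one, hk0]
  · simp

lemma substZ_X {a : PowerSeries ℂ} (ha : constantCoeff a = 0) : substZ a X = a := by
  ext n
  rw [coeff_substZ]
  rw [Finset.sum_eq_single 1]
  · simp
  · intro k hk hk1
    simp [coeff_X, hk1]
  · intro h
    simp only [Finset.mem_range, not_lt] at h
    have hn : n = 0 := by omega
    subst hn
    simp [ha]

/-- sum over `k ≤ n` of sums over antidiagonals equals sum over the square,
provided terms with `p.1 + p.2 > n` vanish. -/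
lemma sum_antidiag_eq_sum_square {n : ℕ} (h : ℕ × ℕ → ℂ)
    (h0 : ∀ p : ℕ × ℕ, n < p.1 + p.2 → h p = 0) :
    ∑ k ∈ Finset.range (n + 1), ∑ p ∈ Finset.HasAntidiagonal.antidiagonal k, h p
      = ∑ p ∈ Finset.range (n + 1) ×ˢ Finset.range (n + 1), h p := by
  rw [← Finset.sum_biUnion]
  · apply Finset.sum_subset
    · intro p hp
      simp only [Finset.mem_biUnion, Finset.mem_range, Finset.HasAntidiagonal.mem_antidiagonal] at hp
      obtain ⟨k, hk, hpk⟩ := hp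
      simp only [Finset.mem_product, Finset.mem_range]
      omega
    · intro p hp hp2
      apply h0
      by_contra hc
      push_neg at hc
      exact hp2 (Finset.mem_biUnion.mpr ⟨p.1 + p.2, Finset.mem_range.mpr (by omega),
        Finset.HasAntidiagonal.mem_antidiagonal.mpr rfl⟩)
  · intro i hi j hj hij
    apply Finset.disjoint_left.mpr
    intro p hpi hpj
    rw [Finset.HasAntidiagonal.mem_antidiagonal] at hpi hpj
    exact hij (by omega)

lemma substZ_mul {a : PowerSeries ℂ} (ha : constantCoeff a = 0) (F G : PowerSeries ℂ) :
    substZ a (F * G) = substZ a F * substZ a G := by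
  ext n
  set h : ℕ × ℕ → ℂ := fun p => coeff p.1 F * coeff p.2 G * coeff n (a ^ (p.1 + p.2))
    with hh
  have h0 : ∀ p : ℕ × ℕ, n < p.1 + p.2 → h p = 0 := by
    intro p hp
    simp [hh, coeff_pow_eq_zero ha hp]
  have hL : coeff n (substZ a (F * G))
      = ∑ k ∈ Finset.range (n + 1), ∑ p ∈ Finset.HasAntidiagonal.antidiagonal k, h p := by
    rw [coeff_substZ]
    apply Finset.sum_congr rfl
    intro k _
    rw [coeff_mul, Finset.sum_mul]
    apply Finset.sum_congr rfl
    intro p hp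
    rw [Finset.HasAntidiagonal.mem_antidiagonal] at hp
    rw [hh]
    simp only []
    rw [hp]
  have hR : coeff n (substZ a F * substZ a G)
      = ∑ p ∈ Finset.range (n + 1) ×ˢ Finset.range (n + 1), h p := by
    rw [coeff_mul]
    have : ∀ q ∈ Finset.HasAntidiagonal.antidiagonal n,
        coeff q.1 (substZ a F) * coeff q.2 (substZ a G)
          = ∑ i ∈ Finset.range (n + 1), ∑ j ∈ Finset.range (n + 1),
              (coeff i F * coeff j G) * (coeff q.1 (a ^ i) * coeff q.2 (a ^ j)) := by
      intro q hq
      rw [Finset.HasAntidiagonal.mem_antidiagonal] at hq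
      rw [coeff_substZ' ha F (show q.1 ≤ n by omega),
        coeff_substZ' ha G (show q.2 ≤ n by omega), Finset.sum_mul_sum]
      apply Finset.sum_congr rfl; intro i _
      apply Finset.sum_congr rfl; intro j _
      ring
    rw [Finset.sum_congr rfl this, Finset.sum_comm]
    rw [Finset.sum_product]
    apply Finset.sum_congr rfl
    intro i _
    rw [Finset.sum_comm]
    apply Finset.sum_congr rfl
    intro j _
    rw [← Finset.mul_sum, hh]
    simp only []
    rw [pow_add, coeff_mul]
  rw [hL, hR]
  exact sum_antidiag_eq_sum_square h h0


lemma substZ_pow {a : PowerSeries ℂ} (ha : constantCoeff a = 0) (b : PowerSeries ℂ) :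
    ∀ k : ℕ, substZ a (b ^ k) = (substZ a b) ^ k := by
  intro k
  induction k with
  | zero => simpa using substZ_one a
  | succ k ih => rw [pow_succ, substZ_mul ha, ih, pow_succ]

lemma constantCoeff_substZ (a : PowerSeries ℂ) {b : PowerSeries ℂ}
    (hb : constantCoeff b = 0) : constantCoeff (substZ a b) = 0 := by
  have := coeff_substZ a b 0
  simp only [coeff_zero_eq_constantCoeff] at this ⊢
  rw [this]
  simp [hb]

lemma substZ_substZ {a b : PowerSeries ℂ} (ha : constantCoeff a = 0)
    (hb : constantCoeff b = 0) (G : PowerSeries ℂ) :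
    substZ a (substZ b G) = substZ (substZ a b) G := by
  ext n
  rw [coeff_substZ, coeff_substZ]
  have hab : constantCoeff (substZ a b) = 0 := constantCoeff_substZ a hb
  calc ∑ k ∈ Finset.range (n + 1), coeff k (substZ b G) * coeff n (a ^ k)
      = ∑ k ∈ Finset.range (n + 1), ∑ j ∈ Finset.range (n + 1),
          coeff j G * coeff k (b ^ j) * coeff n (a ^ k) := by
        apply Finset.sum_congr rfl
        intro k hk
        rw [coeff_substZ' (N := n) hb G (by simp only [Finset.mem_range] at hk; omega),
          Finset.sum_mul]
    _ = ∑ j ∈ Finset.range (n + 1), coeff j G *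
          ∑ k ∈ Finset.range (n + 1), coeff k (b ^ j) * coeff n (a ^ k) := by
        rw [Finset.sum_comm]
        apply Finset.sum_congr rfl
        intro j _
        rw [Finset.mul_sum]
        apply Finset.sum_congr rfl
        intro k _
        ring
    _ = ∑ j ∈ Finset.range (n + 1), coeff j G * coeff n ((substZ a b) ^ j) := by
        apply Finset.sum_congr rfl
        intro j _
        rw [← substZ_pow ha b j, coeff_substZ]


noncomputable def sig : PowerSeries ℂ := X * (1 + X)⁻¹
noncomputable def rho : PowerSeries ℂ := -(X * (1 - X)⁻¹)

lemma c1X : constantCoeff (1 + X : PowerSeries ℂ) = 1 := by simp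
lemma c1X' : constantCoeff (1 - X : PowerSeries ℂ) = 1 := by simp

lemma hu_mul : ((1 + X : PowerSeries ℂ))⁻¹ * (1 + X) = 1 :=
  PowerSeries.inv_mul_cancel _ (by rw [c1X]; exact one_ne_zero)

lemma hmul_u : (1 + X : PowerSeries ℂ) * (1 + X)⁻¹ = 1 :=
  PowerSeries.mul_inv_cancel _ (by rw [c1X]; exact one_ne_zero)

lemma hw_mul : ((1 - X : PowerSeries ℂ))⁻¹ * (1 - X) = 1 :=
  PowerSeries.inv_mul_cancel _ (by rw [c1X']; exact one_ne_zero)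

lemma hmul_w : (1 - X : PowerSeries ℂ) * (1 - X)⁻¹ = 1 :=
  PowerSeries.mul_inv_cancel _ (by rw [c1X']; exact one_ne_zero)

lemma c_sig : constantCoeff sig = 0 := by simp [sig]
lemma c_rho : constantCoeff rho = 0 := by simp [rho]

lemma rho_def : rho = -(X * (1 - X)⁻¹) := rfl
lemma c_negX : constantCoeff (-X : PowerSeries ℂ) = 0 := by simp

lemma c_u : constantCoeff ((1 + X : PowerSeries ℂ))⁻¹ = 1 := by
  have := congrArg (constantCoeff) hu_mul
  simpa [c1X] using this

lemma coeff1_u : coeff 1 ((1 + X : PowerSeries ℂ))⁻¹ = -1 := by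
  have h := congrArg (coeff 1) hu_mul
  rw [coeff_mul, Finset.Nat.sum_antidiagonal_eq_sum_range_succ_mk,
    Finset.sum_range_succ, Finset.sum_range_one] at h
  simp only [map_add, coeff_one, coeff_X, coeff_zero_eq_constantCoeff, c_u] at h
  norm_num at h
  linear_combination h

lemma coeff1_u_pow (k : ℕ) :
    coeff 1 (((1 + X : PowerSeries ℂ))⁻¹ ^ k) = -(k : ℂ) := by
  induction k with
  | zero => simp
  | succ k ih =>
    rw [pow_succ, coeff_mul, Finset.Nat.sum_antidiagonal_eq_sum_range_succ_mk]
    simp only [Finset.sum_range_succ, Finset.sum_range_one, Nat.sub_zero, Nat.sub_self,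
      coeff_zero_eq_constantCoeff, map_pow, c_u, one_pow, coeff1_u, ih]
    push_cast
    ring

lemma coeff_sig_pow_self (k : ℕ) : coeff k (sig ^ k) = 1 := by
  have h := coeff_X_pow_mul (((1 + X : PowerSeries ℂ))⁻¹ ^ k) k 0
  rw [zero_add] at h
  rw [sig, mul_pow, h]
  simp [c_u]

lemma coeff_sig_pow_succ (k : ℕ) : coeff (k + 1) (sig ^ k) = -(k : ℂ) := by
  have h := coeff_X_pow_mul (((1 + X : PowerSeries ℂ))⁻¹ ^ k) k 1
  rw [show 1 + k = k + 1 by omega] at h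
  rw [sig, mul_pow, h]
  exact coeff1_u_pow k

/-- Uniqueness: a series with zero constant term fixed by substituting `sig` is zero. -/
lemma uniq (F : PowerSeries ℂ) (h0 : constantCoeff F = 0)
    (hF : substZ sig F = F) : F = 0 := by
  have key : ∀ n : ℕ, coeff n F = 0 := by
    intro n
    induction n using Nat.strong_induction_on with
    | _ n ih =>
      rcases Nat.eq_zero_or_pos n with hn | hn
      · subst hn; simpa using h0
      · have hc := congrArg (coeff (n + 1)) hF
        rw [coeff_substZ] at hc
        rw [Finset.sum_range_succ, Finset.sum_range_succ] at hc
        have hz : ∑ k ∈ Finset.range n, coeff k F * coeff (n + 1) (sig ^ k) = 0 :=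
          Finset.sum_eq_zero fun k hk => by
            rw [ih k (Finset.mem_range.mp hk), zero_mul]
        rw [hz, zero_add, coeff_sig_pow_self, coeff_sig_pow_succ, mul_one] at hc
        have : coeff n F * -(n : ℂ) = 0 := by linear_combination hc
        rcases mul_eq_zero.mp this with h | h
        · exact h
        · exfalso
          simp only [neg_eq_zero, Nat.cast_eq_zero] at h
          omega
  ext n
  simp [key n]

lemma substZ_sig_rho : substZ sig rho = -X := by
  have h1 : substZ sig rho * (1 - sig) = -sig := by
    have : rho * (1 - X) = -X := by
      rw [rho]
      have : (X : PowerSeries ℂ) * (1 - X)⁻¹ * (1 - X) = X := by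
        rw [mul_assoc, hw_mul, mul_one]
      rw [neg_mul, this]
    have h2 := congrArg (substZ sig) this
    rw [substZ_mul c_sig, substZ_sub, substZ_one, substZ_X c_sig, substZ_neg,
      substZ_X c_sig] at h2
    exact h2
  have h3 : (1 - sig) * (1 + X) = 1 := by
    rw [sig, sub_mul, one_mul, mul_assoc, hu_mul, mul_one, add_sub_cancel_right]
  calc substZ sig rho = substZ sig rho * ((1 - sig) * (1 + X)) := by rw [h3, mul_one]
    _ = (substZ sig rho * (1 - sig)) * (1 + X) := by ring
    _ = -sig * (1 + X) := by rw [h1]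
    _ = -X := by
        rw [sig, neg_mul, mul_assoc, hu_mul, mul_one]

lemma substZ_negX_sig : substZ (-X) sig = rho := by
  have h1 : sig * (1 + X) = X := by
    rw [sig, mul_assoc, hu_mul, mul_one]
  have h2 := congrArg (substZ (-X)) h1
  rw [substZ_mul c_negX, substZ_add, substZ_one, substZ_X c_negX] at h2
  -- h2 : substZ (-X) sig * (1 + -X) = -X
  have h3 : (1 + (-X) : PowerSeries ℂ) = 1 - X := by ring
  rw [h3] at h2
  calc substZ (-X) sig = substZ (-X) sig * ((1 - X) * (1 - X)⁻¹) := by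
        rw [hmul_w, mul_one]
    _ = (substZ (-X) sig * (1 - X)) * (1 - X)⁻¹ := by ring
    _ = -X * (1 - X)⁻¹ := by rw [h2]
    _ = rho := by rw [rho, neg_mul]

end SubstZAux

/-- **Reflection identity `g(x) = −g(1−x)` for the formal solution of
`g(x+1) = g(x) − x⁻²`.**  Identifying `g(x) ∈ x⁻¹ℂ[[x⁻¹]]` with `G(t) ∈ ℂ[[t]]`
with zero constant term via `t = x⁻¹`, the shift `x ↦ x+1` corresponds to
substituting `t·(1+t)⁻¹`, and `x ↦ 1−x` to substituting `−t·(1−t)⁻¹`.  If `G` has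
zero constant term and satisfies `G(t·(1+t)⁻¹) = G(t) − t²`, then
`G(t) = −G(−t·(1−t)⁻¹)`. -/
theorem formal_trigamma_reflection (G : PowerSeries ℂ)
    (h0 : PowerSeries.constantCoeff G = 0)
    (hG : substZ (PowerSeries.X * (1 + PowerSeries.X)⁻¹) G = G - PowerSeries.X ^ 2) :
    G = - substZ (-(PowerSeries.X * (1 - PowerSeries.X)⁻¹)) G := by
  open SubstZAux in
  have hGs : substZ sig G = G - X ^ 2 := hG
  -- step 1 : substZ rho G = substZ (-X) G - X ^ 2
  have step1 : substZ rho G = substZ (-X) G - X ^ 2 := by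
    have h := congrArg (substZ (-X)) hGs
    rw [substZ_substZ c_negX c_sig, substZ_negX_sig, substZ_sub,
      show (X : PowerSeries ℂ) ^ 2 = X * X by ring, substZ_mul c_negX,
      substZ_X c_negX] at h
    rw [h]
    ring_nf
  set H : PowerSeries ℂ := -(substZ rho G) with hH
  have step2 : substZ sig H = H - X ^ 2 := by
    rw [hH, substZ_neg, substZ_substZ c_sig c_rho, substZ_sig_rho]
    have : substZ (-X) G = substZ rho G + X ^ 2 := by rw [step1]; ring
    rw [this]
    ring
  have hF0 : constantCoeff (G - H) = 0 := by
    rw [map_sub, h0, hH, map_neg, constantCoeff_substZ _ h0]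
    ring
  have hFfix : substZ sig (G - H) = G - H := by
    rw [substZ_sub, hGs, step2]
    ring
  have := uniq (G - H) hF0 hFfix
  have hGH : G = H := by linear_combination this
  rw [← rho_def]
  exact hGH.trans hH
end

section
/- Let A be an associative unital ℂ-algebra and let ω₁, ω₂, ω₃, … be elements of A. Define R₀ = 1 and, recursively for n ≥ 1, n·Rₙ = Σ_{k=1}^{n} R_{n−k}·ω_k. Then for every n ≥ 1, Rₙ = Σ_{(k₁,…,k_r)} (k₁(k₁+k₂)⋯(k₁+⋯+k_r))⁻¹ · ω_{k₁}ω_{k₂}⋯ω_{k_r}, where the sum runs over all compositions (k₁,…,k_r) of n, i.e., all ordered tuples of positive integers with k₁+⋯+k_r = n. -/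
open Finset

section Aux

variable {A : Type*} [Ring A] [Algebra ℂ A]

/-- The coefficient `k₁(k₁+k₂)⋯(k₁+⋯+k_r)` of a composition, as a complex number. -/
noncomputable def coeffC {n : ℕ} (c : Composition n) : ℂ :=
  ((((List.range c.length).map fun i => (c.blocks.take (i + 1)).sum).prod : ℕ) : ℂ)

/-- The closed-formula candidate. -/
noncomputable def Sformula (ω : ℕ → A) (n : ℕ) : A :=
  ∑ c : Composition n, (coeffC c)⁻¹ • (c.blocks.map ω).prod

lemma comp_blocks_ne_nil {n : ℕ} (hn : 1 ≤ n) (c : Composition n) : c.blocks ≠ [] := by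
  intro h
  have := c.blocks_sum
  rw [h] at this
  simp at this
  omega

/-- Append a last block `k` to a composition of `n - k`. -/
def extendComp {n k : ℕ} (hk1 : 1 ≤ k) (hk2 : k ≤ n) (c : Composition (n - k)) :
    Composition n where
  blocks := c.blocks ++ [k]
  blocks_pos := by
    intro i hi
    rcases List.mem_append.1 hi with h | h
    · exact c.blocks_pos h
    · simp at h; omega
  blocks_sum := by
    rw [List.sum_append, c.blocks_sum]
    simp
    omega

/-- Split off the last block of a composition of `n ≥ 1`. -/
def splitComp {n : ℕ} (hn : 1 ≤ n) (c : Composition n) : Σ k : ℕ, Composition (n - k) :=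
  ⟨c.blocks.getLast (comp_blocks_ne_nil hn c),
   { blocks := c.blocks.dropLast
     blocks_pos := fun h => c.blocks_pos (List.dropLast_subset _ h)
     blocks_sum := by
       have h1 := c.blocks_sum
       conv at h1 => rw [← List.dropLast_concat_getLast (comp_blocks_ne_nil hn c)]
       rw [List.sum_append, List.sum_cons, List.sum_nil] at h1
       omega }⟩

lemma splitComp_fst_mem {n : ℕ} (hn : 1 ≤ n) (c : Composition n) :
    (splitComp hn c).1 ∈ Finset.Icc 1 n := by
  have hmem := List.getLast_mem (comp_blocks_ne_nil hn c)
  refine Finset.mem_Icc.2 ⟨c.blocks_pos hmem, ?_⟩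
  have := List.le_sum_of_mem hmem
  rwa [c.blocks_sum] at this

lemma extend_split {n : ℕ} (hn : 1 ≤ n) (c : Composition n)
    (hk1 : 1 ≤ (splitComp hn c).1) (hk2 : (splitComp hn c).1 ≤ n) :
    extendComp hk1 hk2 (splitComp hn c).2 = c := by
  apply Composition.ext
  simp only [extendComp, splitComp]
  exact List.dropLast_concat_getLast (comp_blocks_ne_nil hn c)

lemma sigma_comp_ext {n k k' : ℕ} (h : k = k') {c : Composition (n - k)}
    {c' : Composition (n - k')} (hb : c.blocks = c'.blocks) :
    (⟨k, c⟩ : Σ m : ℕ, Composition (n - m)) = ⟨k', c'⟩ := by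
  subst h
  exact congrArg _ (Composition.ext hb)

lemma split_extend {n k : ℕ} (hn : 1 ≤ n) (hk1 : 1 ≤ k) (hk2 : k ≤ n)
    (c : Composition (n - k)) :
    splitComp hn (extendComp hk1 hk2 c) = ⟨k, c⟩ := by
  have hfst : (splitComp hn (extendComp hk1 hk2 c)).1 = k := by
    simp only [splitComp, extendComp]
    exact List.getLast_concat
  have hb : (splitComp hn (extendComp hk1 hk2 c)).2.blocks = c.blocks := by
    simp only [splitComp, extendComp]
    exact List.dropLast_concat
  exact sigma_comp_ext hfst hb

lemma coeffC_extend {n k : ℕ} (hk1 : 1 ≤ k) (hk2 : k ≤ n) (c : Composition (n - k)) :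
    coeffC (extendComp hk1 hk2 c) = coeffC c * n := by
  have hlen : (extendComp hk1 hk2 c).length = c.length + 1 := by
    simp [extendComp, Composition.length]
  have key : ((List.range (extendComp hk1 hk2 c).length).map
      fun i => ((extendComp hk1 hk2 c).blocks.take (i + 1)).sum).prod =
      (((List.range c.length).map fun i => (c.blocks.take (i + 1)).sum).prod) * n := by
    rw [hlen, List.range_succ, List.map_append, List.prod_append]
    congr 1
    · apply congrArg
      apply List.map_congr_left
      intro i hi
      have hi' : i + 1 ≤ c.blocks.length := by
        simp only [List.mem_range] at hi
        simpa [Composition.length] using hi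
      congr 1
      show ((extendComp hk1 hk2 c).blocks.take (i+1)) = c.blocks.take (i+1)
      simp only [extendComp]
      exact List.take_append_of_le_length hi'
    · simp only [List.map_cons, List.map_nil, List.prod_cons, List.prod_nil, mul_one]
      have h2 : ((extendComp hk1 hk2 c).blocks.take (c.length + 1)) =
          (extendComp hk1 hk2 c).blocks := by
        apply List.take_of_length_le
        simp [extendComp, Composition.length]
      rw [h2, (extendComp hk1 hk2 c).blocks_sum]
  rw [coeffC, coeffC, key, Nat.cast_mul]

lemma prod_extend {n k : ℕ} (hk1 : 1 ≤ k) (hk2 : k ≤ n) (c : Composition (n - k)) (ω : ℕ → A) :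
    ((extendComp hk1 hk2 c).blocks.map ω).prod = (c.blocks.map ω).prod * ω k := by
  simp [extendComp]

lemma Sformula_zero (ω : ℕ → A) : Sformula ω 0 = 1 := by
  have huniq : ∀ c : Composition 0, c = Composition.ones 0 := by
    intro c
    apply Composition.ext
    have h0 := c.blocks_sum
    have : c.blocks = [] := by
      rw [List.eq_nil_iff_forall_not_mem]
      intro b hb
      have h1 := c.blocks_pos hb
      have h2 : b = 0 := by
        by_contra hb0
        have := List.single_le_sum (fun x _ => Nat.zero_le x) b hb
        omega
      omega
    rw [this]
    rfl
  haveI : Subsingleton (Composition 0) := ⟨fun a b => (huniq a).trans (huniq b).symm⟩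
  rw [Sformula, Finset.sum_eq_single_of_mem (Composition.ones 0) (Finset.mem_univ _)
    (fun b _ hb => absurd (huniq b) hb)]
  have hblocks : (Composition.ones 0).blocks = [] := rfl
  simp [coeffC, hblocks, Composition.length]

lemma Sformula_rec (ω : ℕ → A) (n : ℕ) (hn : 1 ≤ n) :
    (n : ℂ) • Sformula ω n = ∑ k ∈ Finset.Icc 1 n, Sformula ω (n - k) * ω k := by
  have hn0 : (n : ℂ) ≠ 0 := Nat.cast_ne_zero.2 (by omega)
  rw [Finset.sum_congr rfl (fun k _ => by
    rw [Sformula, Finset.sum_mul] :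
    ∀ k ∈ Finset.Icc 1 n, Sformula ω (n - k) * ω k =
      ∑ c : Composition (n - k), (coeffC c)⁻¹ • (c.blocks.map ω).prod * ω k)]
  rw [← Finset.sum_sigma (Finset.Icc 1 n) (fun _ => (Finset.univ : Finset (Composition (n - _))))
    (fun p => (coeffC p.2)⁻¹ • (p.2.blocks.map ω).prod * ω p.1)]
  rw [Sformula, Finset.smul_sum]
  refine Finset.sum_bij' (fun c _ => splitComp hn c)
    (fun p hp => extendComp (Finset.mem_Icc.1 (Finset.mem_sigma.1 hp).1).1
      (Finset.mem_Icc.1 (Finset.mem_sigma.1 hp).1).2 p.2)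
    (fun c _ => Finset.mem_sigma.2 ⟨splitComp_fst_mem hn c, Finset.mem_univ _⟩)
    (fun p hp => Finset.mem_univ _) (fun c hc => extend_split hn c _ _)
    (fun p hp => ?_) (fun c hc => ?_)
  · exact split_extend hn _ _ p.2
  · -- term equality
    have hmem := splitComp_fst_mem hn c
    obtain ⟨h1, h2⟩ := Finset.mem_Icc.1 hmem
    conv_lhs => rw [← extend_split hn c h1 h2]
    rw [coeffC_extend, prod_extend, smul_smul, mul_inv, mul_comm ((coeffC _)⁻¹),
      ← mul_assoc, mul_inv_cancel₀ hn0, one_mul, ← smul_mul_assoc]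

end Aux

/-- **Closed formula for the solution of the recursion `n·Rₙ = Σ_{k=1}^{n} R_{n−k}·ω_k`,
`R₀ = 1`, in an associative unital `ℂ`-algebra.**  For every `n ≥ 1`,
`Rₙ = Σ (k₁(k₁+k₂)⋯(k₁+⋯+k_r))⁻¹ · ω_{k₁}⋯ω_{k_r}`, the sum ranging over all
compositions `(k₁,…,k_r)` of `n`. -/
theorem recursion_closed_formula {A : Type*} [Ring A] [Algebra ℂ A]
    (ω : ℕ → A) (R : ℕ → A) (hR0 : R 0 = 1)
    (hrec : ∀ n : ℕ, 1 ≤ n →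
      (n : ℂ) • R n = ∑ k ∈ Finset.Icc 1 n, R (n - k) * ω k) :
    ∀ n : ℕ, 1 ≤ n →
      R n = ∑ c : Composition n,
        ((((List.range c.length).map fun i => (c.blocks.take (i + 1)).sum).prod : ℂ))⁻¹ •
          (c.blocks.map ω).prod := by
  intro n
  induction n using Nat.strong_induction_on with
  | _ n IH =>
    intro hn
    show R n = Sformula ω n
    have hn0 : (n : ℂ) ≠ 0 := Nat.cast_ne_zero.2 (by omega)
    have h1 : (n : ℂ) • R n = (n : ℂ) • Sformula ω n := by
      rw [hrec n hn, Sformula_rec ω n hn]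
      refine Finset.sum_congr rfl fun k hk => ?_
      obtain ⟨hk1, hk2⟩ := Finset.mem_Icc.1 hk
      congr 1
      rcases eq_or_lt_of_le hk2 with h | h
      · rw [h, Nat.sub_self, hR0, Sformula_zero]
      · exact IH (n - k) (by omega) (by omega)
    calc R n = (n : ℂ)⁻¹ • ((n : ℂ) • R n) := (inv_smul_smul₀ hn0 _).symm
    _ = (n : ℂ)⁻¹ • ((n : ℂ) • Sformula ω n) := by rw [h1]
    _ = Sformula ω n := inv_smul_smul₀ hn0 _
end

section
/- Let M and P be ℂ-vector spaces, let (f_i : M → N_i)_{i∈I} and (g_j : P → Q_j)_{j∈J} be families of ℂ-linear maps into ℂ-vector spaces such that ⋂_{i∈I} ker f_i = 0 and ⋂_{j∈J} ker g_j = 0. Then ⋂_{(i,j)∈I×J} ker(f_i ⊗ g_j) = 0 in M ⊗ P, where f_i ⊗ g_j : M ⊗ P → N_i ⊗ Q_j is the induced map on tensor products. -/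
open TensorProduct

/-- Coordinate map `V ⊗ P → V` induced by a functional on `P`. -/
private noncomputable def coordMap {P : Type*} [AddCommGroup P] [Module ℂ P]
    (c : P →ₗ[ℂ] ℂ) (V : Type*) [AddCommGroup V] [Module ℂ V] :
    V ⊗[ℂ] P →ₗ[ℂ] V :=
  (TensorProduct.rid ℂ V).toLinearMap ∘ₗ TensorProduct.map LinearMap.id c

private lemma coordMap_tmul {P : Type*} [AddCommGroup P] [Module ℂ P]
    (c : P →ₗ[ℂ] ℂ) (V : Type*) [AddCommGroup V] [Module ℂ V] (v : V) (p : P) :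
    coordMap c V (v ⊗ₜ p) = c p • v := by
  simp [coordMap]

/-- If the family `f i` separates points of `M`, then the family `f i ⊗ id` separates
points of `M ⊗ P`. -/
private lemma aux_left {I M P : Type*} [AddCommGroup M] [Module ℂ M]
    [AddCommGroup P] [Module ℂ P]
    {N : I → Type*} [∀ i, AddCommGroup (N i)] [∀ i, Module ℂ (N i)]
    (f : ∀ i, M →ₗ[ℂ] N i) (hf : ∀ m : M, (∀ i, f i m = 0) → m = 0)
    (x : M ⊗[ℂ] P) (hx : ∀ i, TensorProduct.map (f i) LinearMap.id x = 0) :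
    x = 0 := by
  classical
  let b := Module.Free.chooseBasis ℂ P
  set ι := Module.Free.ChooseBasisIndex ℂ P
  -- compatibility of φ with `map (f i) id`
  have hcompat : ∀ (i : I) (k : ι) (y : M ⊗[ℂ] P),
      coordMap (b.coord k) (N i) (TensorProduct.map (f i) LinearMap.id y) = f i (coordMap (b.coord k) M y) := by
    intro i k y
    have : coordMap (b.coord k) (N i) ∘ₗ TensorProduct.map (f i) LinearMap.id = f i ∘ₗ coordMap (b.coord k) M := by
      apply TensorProduct.ext'
      intro m p
      simp [coordMap_tmul]
    exact LinearMap.congr_fun this y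
  -- each coordinate of x vanishes
  have hcoord : ∀ k : ι, coordMap (b.coord k) M x = 0 := by
    intro k
    apply hf
    intro i
    rw [← hcompat i k x, hx i, map_zero]
  -- conclude x = 0 via the equivalence M ⊗ P ≃ (ι →₀ M)
  let E : M ⊗[ℂ] P ≃ₗ[ℂ] (ι →₀ M) :=
    (TensorProduct.congr (LinearEquiv.refl ℂ M) b.repr).trans
      (TensorProduct.finsuppScalarRight ℂ ℂ M ι)
  have hE : ∀ (k : ι) (y : M ⊗[ℂ] P), E y k = coordMap (b.coord k) M y := by
    intro k y
    have : (Finsupp.lapply k ∘ₗ E.toLinearMap : M ⊗[ℂ] P →ₗ[ℂ] M) = coordMap (b.coord k) M := by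
      apply TensorProduct.ext'
      intro m p
      simp [E, coordMap_tmul, TensorProduct.finsuppScalarRight_apply_tmul_apply,
        Module.Basis.coord_apply]
    exact LinearMap.congr_fun this y
  have : E x = 0 := by
    ext k
    simp [hE, hcoord]
  simpa using E.injective (by simpa using this)

/-- **Separation of points passes to tensor products.**  If `(f_i : M → N_i)` and
`(g_j : P → Q_j)` are families of `ℂ`-linear maps with `⋂ᵢ ker f_i = 0` and
`⋂ⱼ ker g_j = 0`, then `⋂_{(i,j)} ker (f_i ⊗ g_j) = 0` in `M ⊗ P`. -/
theorem iInf_ker_tensorProduct_map_eq_bot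
    {I J M P : Type*} [AddCommGroup M] [Module ℂ M] [AddCommGroup P] [Module ℂ P]
    {N : I → Type*} [∀ i, AddCommGroup (N i)] [∀ i, Module ℂ (N i)]
    {Q : J → Type*} [∀ j, AddCommGroup (Q j)] [∀ j, Module ℂ (Q j)]
    (f : ∀ i, M →ₗ[ℂ] N i) (g : ∀ j, P →ₗ[ℂ] Q j)
    (hf : ⨅ i, LinearMap.ker (f i) = ⊥) (hg : ⨅ j, LinearMap.ker (g j) = ⊥) :
    ⨅ p : I × J, LinearMap.ker (TensorProduct.map (f p.1) (g p.2)) = ⊥ := by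
  have hf' : ∀ m : M, (∀ i, f i m = 0) → m = 0 := by
    intro m hm
    have : m ∈ (⊥ : Submodule ℂ M) := hf ▸ (Submodule.mem_iInf _).2 fun i => hm i
    simpa using this
  have hg' : ∀ p : P, (∀ j, g j p = 0) → p = 0 := by
    intro p hp
    have : p ∈ (⊥ : Submodule ℂ P) := hg ▸ (Submodule.mem_iInf _).2 fun j => hp j
    simpa using this
  rw [eq_bot_iff]
  intro x hx
  rw [Submodule.mem_iInf] at hx
  simp only [LinearMap.mem_ker] at hx
  rw [Submodule.mem_bot]
  -- step 1: for each i, (f i ⊗ id) x is killed by all (id ⊗ g j), hence zero.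
  have step1 : ∀ i, TensorProduct.map (f i) (LinearMap.id : P →ₗ[ℂ] P) x = 0 := by
    intro i
    set y := TensorProduct.map (f i) (LinearMap.id : P →ₗ[ℂ] P) x with hy
    have hyj : ∀ j, TensorProduct.map (LinearMap.id : N i →ₗ[ℂ] N i) (g j) y = 0 := by
      intro j
      have hcomp : TensorProduct.map (LinearMap.id : N i →ₗ[ℂ] N i) (g j) ∘ₗ
          TensorProduct.map (f i) (LinearMap.id : P →ₗ[ℂ] P)
          = TensorProduct.map (f i) (g j) := by
        rw [← TensorProduct.map_comp]
        simp
      have := LinearMap.congr_fun hcomp x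
      simp only [LinearMap.comp_apply] at this
      rw [hy, this, hx ⟨i, j⟩]
    -- flip the factors and apply aux_left
    have hflip : ∀ j, TensorProduct.map (g j) (LinearMap.id : N i →ₗ[ℂ] N i)
        ((TensorProduct.comm ℂ (N i) P) y) = 0 := by
      intro j
      have hnat : (TensorProduct.map (g j) (LinearMap.id : N i →ₗ[ℂ] N i)) ∘ₗ
          (TensorProduct.comm ℂ (N i) P).toLinearMap
          = (TensorProduct.comm ℂ (N i) (Q j)).toLinearMap ∘ₗ
            TensorProduct.map (LinearMap.id : N i →ₗ[ℂ] N i) (g j) := by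
        apply TensorProduct.ext'
        intro n p
        simp
      have := LinearMap.congr_fun hnat y
      simp only [LinearMap.comp_apply, LinearEquiv.coe_coe] at this
      rw [this, hyj j, map_zero]
    have : (TensorProduct.comm ℂ (N i) P) y = 0 :=
      aux_left g hg' _ hflip
    simpa using (TensorProduct.comm ℂ (N i) P).injective (by simpa using this)
  exact aux_left f hf' x step1
end
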